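/- Under the construction of the previous statement (uniform random index M, exact π-sample at position M, chain run backwards and forwards with a π-reversible kernel K), if R: Θ^L → S_L is an ordinal ranking function chosen independently of M, then the rank statistic R_M(θ_1,...,θ_L) is exactly uniformly distributed on {1,...,L}. -/

import Mathlib

open MeasureTheory ProbabilityTheory

noncomputable def chainFrom {Θ : Type*} [MeasurableSpace Θ]
    (K : Kernel Θ Θ) : (n : ℕ) → Θ → Measure (Fin n → Θ)
  | 0, _ => Measure.dirac (fun i => i.elim0)
  | n + 1, θ => (K θ).bind (fun θ1 => (chainFrom K n θ1).map (Fin.cons θ1))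

def assembleTraj {Θ : Type*} (L : ℕ) (m : Fin L) (θ : Θ)
    (b : Fin (m : ℕ) → Θ) (f : Fin (L - 1 - (m : ℕ)) → Θ) : Fin L → Θ :=
  fun i =>
    if h : (i : ℕ) < (m : ℕ) then b ⟨(m : ℕ) - 1 - (i : ℕ), by omega⟩
    else if h' : (i : ℕ) = (m : ℕ) then θ
    else f ⟨(i : ℕ) - (m : ℕ) - 1, by omega⟩

/-- Joint law of the trajectory given the starting index `m`: an exact `π`-sample is
placed at position `m`, and the chain is run backwards `m` steps and forwards
`L - 1 - m` steps using the kernel `K`. -/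
noncomputable def backForthLaw {Θ : Type*} [MeasurableSpace Θ]
    (K : Kernel Θ Θ) (π : Measure Θ) (L : ℕ) (m : Fin L) : Measure (Fin L → Θ) :=
  π.bind (fun θ =>
    ((chainFrom K (m : ℕ) θ).prod (chainFrom K (L - 1 - (m : ℕ)) θ)).map
      (fun p => assembleTraj L m θ p.1 p.2))

/-!
Moving the pivot from `j + 1` to `j` does not change the law of the trajectory: in both cases the
pair `(θ_{j+1}, θ_j)` is drawn from `π ⊗ K` (once as `(θ_{j+1}, θ_j)`, once as `(θ_j, θ_{j+1})`),
which reversibility makes symmetric, and the rest of the trajectory consists of two chains started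
from this pair. So the law `P` of the trajectory does not depend on the pivot, and
`(1/L) ∑ₘ Pₘ(R_m = k) = (1/L) ∑ₘ P(R_m = k) = 1/L`, because for each trajectory exactly one
`m` has `R_m = k`.
-/

namespace MeasureTheory.Measure

variable {α β γ : Type*} [MeasurableSpace α] [MeasurableSpace β] [MeasurableSpace γ]

lemma prod_map_left (μ : Measure α) (ν : Measure β) [SFinite μ] [SFinite ν] {f : α → γ}
    (hf : Measurable f) : (μ.map f).prod ν = (μ.prod ν).map (Prod.map f id) := by
  simpa using map_prod_map μ ν hf measurable_id

lemma prod_map_right (μ : Measure α) (ν : Measure β) [SFinite μ] [SFinite ν] {g : β → γ}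
    (hg : Measurable g) : μ.prod (ν.map g) = (μ.prod ν).map (Prod.map id g) := by
  simpa using map_prod_map μ ν measurable_id hg

lemma comp_prod (μ : Measure α) (κ : Kernel α β) [IsSFiniteKernel κ] (ν : Measure γ)
    [SFinite ν] : (κ ∘ₘ μ).prod ν = (κ ×ₖ Kernel.const α ν) ∘ₘ μ := by
  ext s hs
  rw [prod_apply hs, bind_apply hs (Kernel.aemeasurable _),
    lintegral_bind κ.aemeasurable (measurable_measure_prodMk_left hs).aemeasurable]
  simp_rw [Kernel.prod_apply, Kernel.const_apply, prod_apply hs]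

lemma prod_comp (ν : Measure γ) [SFinite ν] (μ : Measure α) [SFinite μ] (κ : Kernel α β)
    [IsSFiniteKernel κ] : ν.prod (κ ∘ₘ μ) = (Kernel.const α ν ×ₖ κ) ∘ₘ μ := by
  rw [← prod_swap, comp_prod, map_comp _ _ measurable_swap, Kernel.map_prod_swap]

lemma bind_bind_eq_comp_compProd (μ : Measure α) [SFinite μ] (κ : Kernel α β) [IsSFiniteKernel κ]
    (η : Kernel (α × β) γ) :
    (μ.bind fun a => (κ a).bind fun b => η (a, b)) = η ∘ₘ (μ ⊗ₘ κ) := by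
  have hcomp : (fun a => (κ a).bind fun b => η (a, b)) = η ∘ₖ (Kernel.id ×ₖ κ) := by
    ext1 a
    rw [Kernel.comp_apply, Kernel.prod_apply, Kernel.id_apply, dirac_prod,
      ← deterministic_comp_eq_map measurable_prodMk_left, comp_assoc,
      Kernel.comp_deterministic_eq_comap]
    rfl
  rw [hcomp, ← comp_assoc, compProd_eq_comp_prod]

end MeasureTheory.Measure

namespace ProbabilityTheory.Kernel

variable {α β γ : Type*} [MeasurableSpace α] [MeasurableSpace β] [MeasurableSpace γ]

lemma map_id_prod_apply (η : Kernel α β) [IsSFiniteKernel η] {f : α × β → γ} (hf : Measurable f)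
    (a : α) : (Kernel.id ×ₖ η).map f a = (η a).map fun b => f (a, b) := by
  rw [map_apply _ hf, prod_apply, id_apply, Measure.dirac_prod,
    Measure.map_map hf measurable_prodMk_left]
  rfl

end ProbabilityTheory.Kernel

@[fun_prop]
lemma Measurable.finCons {α β : Type*} [MeasurableSpace α] [MeasurableSpace β] {n : ℕ} {f : α → β}
    {g : α → Fin n → β}
    (hf : Measurable f) (hg : Measurable g) :
    Measurable fun a => (Fin.cons (f a) (g a) : Fin (n + 1) → β) := by
  refine measurable_pi_iff.2 fun i => Fin.cases ?_ (fun j => ?_) i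
  · simpa using hf
  · simp only [Fin.cons_succ]
    fun_prop

section Chain

variable {Θ : Type*} [MeasurableSpace Θ]

@[fun_prop]
lemma Measurable.assembleTraj {α : Type*} [MeasurableSpace α] {L : ℕ} {m : Fin L} {θ : α → Θ}
    {b : α → Fin m → Θ} {f : α → Fin (L - 1 - m) → Θ} (hθ : Measurable θ) (hb : Measurable b)
    (hf : Measurable f) : Measurable fun a => assembleTraj L m (θ a) (b a) (f a) := by
  refine measurable_pi_iff.2 fun i => ?_
  unfold _root_.assembleTraj
  split_ifs <;> fun_prop

noncomputable def chainKernel (K : Kernel Θ Θ) : (n : ℕ) → Kernel Θ (Fin n → Θ)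
  | 0 => Kernel.const Θ (Measure.dirac fun i => i.elim0)
  | n + 1 => (Kernel.id ×ₖ chainKernel K n).map (fun p => Fin.cons p.1 p.2) ∘ₖ K

variable (K : Kernel Θ Θ)

lemma chainKernel_succ_apply (n : ℕ) (θ : Θ) :
    chainKernel K (n + 1) θ
      = (K θ).bind ((Kernel.id ×ₖ chainKernel K n).map fun p => Fin.cons p.1 p.2) :=
  rfl

lemma chainKernel_cast {a b : ℕ} (h : a = b) (θ : Θ) :
    chainKernel K b θ = (chainKernel K a θ).map fun v i => v (Fin.cast h.symm i) := by
  subst h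
  exact (Measure.map_id).symm

variable [IsMarkovKernel K]

instance (n : ℕ) : IsMarkovKernel (chainKernel K n) := by
  induction n with
  | zero => rw [chainKernel]; infer_instance
  | succ n ih =>
    have := Kernel.IsMarkovKernel.map (Kernel.id ×ₖ chainKernel K n)
      (by fun_prop : Measurable fun p : Θ × (Fin n → Θ) => (Fin.cons p.1 p.2 : Fin (n + 1) → Θ))
    rw [chainKernel]; infer_instance

lemma chainKernel_apply (n : ℕ) (θ : Θ) : chainKernel K n θ = chainFrom K n θ := by
  induction n generalizing θ with
  | zero => rfl
  | succ n ih =>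
    rw [chainKernel_succ_apply, chainFrom]
    congr 1
    ext1 θ1
    rw [Kernel.map_id_prod_apply _ (by fun_prop), ih]

end Chain

lemma Fin.cons_mk {α : Type*} {n : ℕ} (x : α) (v : Fin n → α) (k : ℕ) (hk : k < n + 1) :
    (Fin.cons x v : Fin (n + 1) → α) ⟨k, hk⟩ = if h : k = 0 then x else v ⟨k - 1, by omega⟩ := by
  cases k <;> rfl

lemma assembleTraj_succ {Θ : Type*} (L j : ℕ) (h : j + 1 < L) (θ θ1 : Θ) (b : Fin j → Θ)
    (f : Fin (L - 1 - (j + 1)) → Θ) :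
    assembleTraj L ⟨j, by omega⟩ θ1 b
        (fun i => (Fin.cons θ f : Fin (L - 1 - (j + 1) + 1) → Θ)
          (Fin.cast (by dsimp only; omega) i))
      = assembleTraj L ⟨j + 1, h⟩ θ (Fin.cons θ1 b) f := by
  funext i
  simp only [assembleTraj, Fin.cast_mk, Fin.cons_mk]
  split_ifs <;> first | rfl | omega | (congr 1; ext; simp only; omega)

section Trajectory

variable {Θ : Type*} [MeasurableSpace Θ] (K : Kernel Θ Θ)

noncomputable def backForthKernel (L : ℕ) (m : Fin L) : Kernel Θ (Fin L → Θ) :=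
  (Kernel.id ×ₖ (chainKernel K m ×ₖ chainKernel K (L - 1 - m))).map
    fun x => assembleTraj L m x.1 x.2.1 x.2.2

/-- Law of the trajectory given its values `p.1` at position `j + 1` and `p.2` at position `j`. -/
noncomputable def adjacentPinnedKernel (L j : ℕ) (h : j + 1 < L) : Kernel (Θ × Θ) (Fin L → Θ) :=
  (Kernel.id ×ₖ ((chainKernel K j).comap Prod.snd measurable_snd ×ₖ
      (chainKernel K (L - 1 - (j + 1))).comap Prod.fst measurable_fst)).map
    fun x => assembleTraj L ⟨j + 1, h⟩ x.1.1 (Fin.cons x.1.2 x.2.1) x.2.2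

variable [IsMarkovKernel K]

lemma backForthKernel_apply (L : ℕ) (m : Fin L) (θ : Θ) :
    backForthKernel K L m θ = ((chainKernel K m θ).prod (chainKernel K (L - 1 - m) θ)).map
      fun p => assembleTraj L m θ p.1 p.2 := by
  rw [backForthKernel, Kernel.map_id_prod_apply _ (by fun_prop), Kernel.prod_apply]

lemma backForthLaw_eq_comp (π : Measure Θ) (L : ℕ) (m : Fin L) :
    backForthLaw K π L m = backForthKernel K L m ∘ₘ π := by
  unfold backForthLaw
  congr 1
  ext1 θ
  rw [backForthKernel_apply, chainKernel_apply, chainKernel_apply]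

instance (L : ℕ) (m : Fin L) : IsMarkovKernel (backForthKernel K L m) :=
  Kernel.IsMarkovKernel.map _ (by fun_prop)

instance (π : Measure Θ) [IsProbabilityMeasure π] (L : ℕ) (m : Fin L) :
    IsProbabilityMeasure (backForthLaw K π L m) := by
  rw [backForthLaw_eq_comp]
  infer_instance

lemma adjacentPinnedKernel_apply (L j : ℕ) (h : j + 1 < L) (θ θ1 : Θ) :
    adjacentPinnedKernel K L j h (θ, θ1)
      = ((chainKernel K j θ1).prod (chainKernel K (L - 1 - (j + 1)) θ)).map
          fun q => assembleTraj L ⟨j + 1, h⟩ θ (Fin.cons θ1 q.1) q.2 := by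
  rw [adjacentPinnedKernel, Kernel.map_id_prod_apply, Kernel.prod_apply, Kernel.comap_apply,
    Kernel.comap_apply]
  fun_prop

lemma backForthKernel_succ_eq_bind (L j : ℕ) (h : j + 1 < L) (θ : Θ) :
    backForthKernel K L ⟨j + 1, h⟩ θ
      = (K θ).bind fun θ1 => adjacentPinnedKernel K L j h (θ, θ1) := by
  rw [backForthKernel_apply, chainKernel_succ_apply, Measure.comp_prod,
    Measure.map_comp _ _ (by fun_prop)]
  congr 1
  ext1 θ1
  rw [Kernel.map_apply _ (by fun_prop), Kernel.prod_apply, Kernel.const_apply,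
    Kernel.map_id_prod_apply _ (by fun_prop), Measure.prod_map_left _ _ (by fun_prop),
    Measure.map_map (by fun_prop) (by fun_prop), adjacentPinnedKernel_apply]
  rfl

lemma backForthKernel_eq_bind_of_succ_lt (L j : ℕ) (h : j + 1 < L) (θ1 : Θ) :
    backForthKernel K L ⟨j, by omega⟩ θ1
      = (K θ1).bind fun θ => adjacentPinnedKernel K L j h (θ, θ1) := by
  rw [backForthKernel_apply, chainKernel_cast K (show L - 1 - (j + 1) + 1 = L - 1 - j by omega),
    Measure.prod_map_right _ _ (by fun_prop), Measure.map_map (by fun_prop) (by fun_prop),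
    chainKernel_succ_apply, Measure.prod_comp, Measure.map_comp _ _ (by fun_prop)]
  congr 1
  ext1 θ
  rw [Kernel.map_apply _ (by fun_prop), Kernel.prod_apply, Kernel.const_apply,
    Kernel.map_id_prod_apply _ (by fun_prop), Measure.prod_map_right _ _ (by fun_prop),
    Measure.map_map (by fun_prop) (by fun_prop), adjacentPinnedKernel_apply]
  congr 1
  funext q
  exact assembleTraj_succ L j h θ θ1 q.1 q.2

end Trajectory

section Reversibility

variable {Θ : Type*} [MeasurableSpace Θ] {K : Kernel Θ Θ} [IsMarkovKernel K] {π : Measure Θ}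
  [IsProbabilityMeasure π]

lemma backForthLaw_succ (hrev : π ⊗ₘ K = (π ⊗ₘ K).map Prod.swap) (L j : ℕ) (h : j + 1 < L) :
    backForthLaw K π L ⟨j + 1, h⟩ = backForthLaw K π L ⟨j, by omega⟩ := by
  set G := adjacentPinnedKernel K L j h
  calc backForthLaw K π L ⟨j + 1, h⟩ = G ∘ₘ (π ⊗ₘ K) := by
        rw [backForthLaw_eq_comp, ← Measure.bind_bind_eq_comp_compProd]
        congr 1
        ext1 θ
        exact backForthKernel_succ_eq_bind K L j h θ
    _ = G ∘ₘ ((π ⊗ₘ K).map Prod.swap) := by rw [← hrev]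
    _ = G.comap Prod.swap measurable_swap ∘ₘ (π ⊗ₘ K) := by
        rw [← Measure.deterministic_comp_eq_map measurable_swap, Measure.comp_assoc,
          Kernel.comp_deterministic_eq_comap]
    _ = backForthLaw K π L ⟨j, by omega⟩ := by
        rw [backForthLaw_eq_comp, ← Measure.bind_bind_eq_comp_compProd]
        congr 1
        ext1 θ1
        exact (backForthKernel_eq_bind_of_succ_lt K L j h θ1).symm

lemma backForthLaw_eq (hrev : π ⊗ₘ K = (π ⊗ₘ K).map Prod.swap) {L : ℕ} (m m' : Fin L) :
    backForthLaw K π L m = backForthLaw K π L m' := by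
  suffices h : ∀ m : Fin L, backForthLaw K π L m = backForthLaw K π L ⟨0, m.pos⟩ by
    rw [h m, h m']
  rintro ⟨m, hm⟩
  induction m with
  | zero => rfl
  | succ j ih => rw [backForthLaw_succ hrev L j hm, ih]

end Reversibility

lemma sum_measure_setOf_apply_eq_of_bijective {α ι : Type*} [MeasurableSpace α] [Fintype ι]
    [MeasurableSpace ι] [MeasurableSingletonClass ι] (μ : Measure α) {R : α → ι → ι}
    (hR : Measurable R) (hbij : ∀ v, Function.Bijective (R v)) (k : ι) :
    ∑ m, μ {v | R v m = k} = μ Set.univ := by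
  have hcover : ⋃ m, {v | R v m = k} = Set.univ :=
    Set.eq_univ_of_forall fun v => Set.mem_iUnion.2 ((hbij v).2 k)
  have hdisj : Pairwise (Function.onFun Disjoint fun m => {v | R v m = k}) :=
    fun m m' hmm' => Set.disjoint_left.2 fun v hv hv' => hmm' ((hbij v).1 (hv.trans hv'.symm))
  rw [← hcover, measure_iUnion hdisj fun m => (measurable_pi_apply m).comp hR
    (measurableSet_singleton k), tsum_fintype]

theorem rank_statistic_uniform_general
    {Θ : Type*} [MeasurableSpace Θ]
    (K : Kernel Θ Θ) [IsMarkovKernel K]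
    (π : Measure Θ) [IsProbabilityMeasure π]
    (hrev : π ⊗ₘ K = (π ⊗ₘ K).map Prod.swap)
    (L : ℕ)
    (R : (Fin L → Θ) → (Fin L → Fin L))
    (hRmeas : Measurable R)
    (hRperm : ∀ v, Function.Bijective (R v)) :
    ∀ k : Fin L,
      (L : ENNReal)⁻¹ * ∑ m : Fin L, backForthLaw K π L m {v | R v m = k}
        = (L : ENNReal)⁻¹ := by
  intro k
  simp_rw [backForthLaw_eq hrev _ k]
  rw [sum_measure_setOf_apply_eq_of_bijective _ hRmeas hRperm, measure_univ, mul_one]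

/-- If `K` is reversible w.r.t. the probability measure `π` and `R` is a
(deterministic, hence independent of `M`) ordinal ranking, i.e. `R v` is a
permutation of `{1,...,L}` for every trajectory `v`, then the rank statistic
`R_M(θ_1,...,θ_L)`, with `M` uniform on `{1,...,L}`, is exactly uniformly
distributed: for every `k`, `P(R_M = k) = (1/L) ∑_m P_m(R_m = k) = 1/L`. -/
theorem rank_statistic_uniform
    {Θ : Type*} [MeasurableSpace Θ]
    (K : Kernel Θ Θ) [IsMarkovKernel K]
    (π : Measure Θ) [IsProbabilityMeasure π]
    (hrev : π ⊗ₘ K = (π ⊗ₘ K).map Prod.swap)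
    (L : ℕ) (hL : 0 < L)
    (R : (Fin L → Θ) → (Fin L → Fin L))
    (hRmeas : Measurable R)
    (hRperm : ∀ v, Function.Bijective (R v)) :
    ∀ k : Fin L,
      (L : ENNReal)⁻¹ * ∑ m : Fin L, backForthLaw K π L m {v | R v m = k}
        = (L : ENNReal)⁻¹ :=
  rank_statistic_uniform_general K π hrev L R hRmeas hRperm
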